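/- arXiv:1101.4986 — 2 statements merged into one kernel-verified Lean document; each statement's English description precedes it below -/
import Mathlib

section
/- Let m ≥ 2, and let w : Fin m → ℝ satisfy w (Fin.last) = 0 and have two coordinates w i, w j that are linearly independent over ℚ. Let g : ℝ → ℝ be any function, and let γ : ℝ → (Fin m → ℝ) be a curve such that for every t, γ has derivative g(γ(t) (Fin.last)) • w at t. If there exists T > 0 such that γ(T) k − γ(0) k is an integer for every index k, then γ is constant. -/
/-!
The last coordinate of `γ` has derivative `g (γ t last) * w last = 0`, so it is constant; hence
the velocity `g (γ t last) • w` is a constant vector `c • w` and `γ t = γ 0 + t • c • w`.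
Closing up at time `T` makes `(T * c) * w i` and `(T * c) * w j` integers `a` and `b`; then
`b * w i - a * w j = 0` is a rational relation, so `a = b = 0`, and `T * c = 0` because `w i ≠ 0`.
Thus `c = 0` and `γ` is constant.
-/

theorem eq_of_hasDerivAt_pi_apply_eq_zero {ι : Type*} [Fintype ι] {γ v : ℝ → ι → ℝ} {k : ι}
    (hγ : ∀ t, HasDerivAt γ (v t) t) (hv : ∀ t, v t k = 0) (t s : ℝ) : γ t k = γ s k := by
  have hder : ∀ t, HasDerivAt (fun u => γ u k) 0 t := fun t => by
    simpa only [hv t] using hasDerivAt_pi.mp (hγ t) k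
  exact is_const_of_deriv_eq_zero (fun u => (hder u).differentiableAt) (fun u => (hder u).deriv) t s

theorem eq_add_smul_of_hasDerivAt_const {E : Type*} [NormedAddCommGroup E] [NormedSpace ℝ E]
    {γ : ℝ → E} {v : E} (hγ : ∀ t, HasDerivAt γ v t) (t : ℝ) : γ t = γ 0 + t • v := by
  have hder : ∀ u, HasDerivAt (fun u => γ u - u • v) 0 u := fun u =>
    ((hγ u).sub ((hasDerivAt_id' u).smul_const v)).congr_deriv (by rw [one_smul, sub_self])
  have := is_const_of_deriv_eq_zero (fun u => (hder u).differentiableAt)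
    (fun u => (hder u).deriv) t 0
  rw [zero_smul, sub_zero] at this
  rw [← this, sub_add_cancel]

theorem eq_zero_of_mul_eq_intCast_of_linearIndependent {x y s : ℝ} {a b : ℤ}
    (hxy : LinearIndependent ℚ ![x, y]) (ha : s * x = a) (hb : s * y = b) : s = 0 := by
  have hrel : (b : ℚ) • x + (-a : ℚ) • y = 0 := by
    simp only [Rat.smul_def, Rat.cast_neg, Rat.cast_intCast, ← ha, ← hb]
    ring
  obtain ⟨hb0, ha0⟩ := LinearIndependent.pair_iff.mp hxy _ _ hrel
  have hx : x ≠ 0 := by simpa using hxy.ne_zero 0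
  rw [neg_eq_zero, Int.cast_eq_zero] at ha0
  rw [ha0, Int.cast_zero, mul_eq_zero] at ha
  exact ha.resolve_right hx

theorem stmt_2_general (n : ℕ) (w : Fin (n + 1) → ℝ)
    (hlast : w (Fin.last n) = 0)
    (hw : ∃ i j : Fin (n + 1), LinearIndependent ℚ ![w i, w j])
    (g : ℝ → ℝ) (γ : ℝ → (Fin (n + 1) → ℝ))
    (hγ : ∀ t : ℝ, HasDerivAt γ (g (γ t (Fin.last n)) • w) t)
    (hper : ∃ T : ℝ, 0 < T ∧ ∀ k : Fin (n + 1), ∃ m : ℤ, γ T k - γ 0 k = (m : ℝ)) :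
    ∀ t s : ℝ, γ t = γ s := by
  set c := g (γ 0 (Fin.last n))
  have hlast_const : ∀ t, γ t (Fin.last n) = γ 0 (Fin.last n) :=
    fun t => eq_of_hasDerivAt_pi_apply_eq_zero hγ (by simp [hlast]) t 0
  have hline : ∀ t, γ t = γ 0 + t • c • w :=
    eq_add_smul_of_hasDerivAt_const fun t => by simpa only [hlast_const t] using hγ t
  obtain ⟨T, hT, hint⟩ := hper
  obtain ⟨i, j, hij⟩ := hw
  have hdisp : ∀ k, γ T k - γ 0 k = T * c * w k := fun k => by
    rw [hline T]; simp [mul_assoc]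
  obtain ⟨a, ha⟩ := hint i
  obtain ⟨b, hb⟩ := hint j
  have hTc : T * c = 0 :=
    eq_zero_of_mul_eq_intCast_of_linearIndependent hij (hdisp i ▸ ha) (hdisp j ▸ hb)
  have hc : c = 0 := (mul_eq_zero.mp hTc).resolve_left hT.ne'
  intro t s
  rw [hline t, hline s, hc, zero_smul, smul_zero, smul_zero]

/-- Zehnder's example in coordinates: let `w : Fin (n+1) → ℝ` (with `n + 1 ≥ 2`)
have vanishing last coordinate and two coordinates linearly independent over `ℚ`.
If a curve `γ : ℝ → (Fin (n+1) → ℝ)` satisfies `γ' t = g (γ t (last)) • w` for some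
function `g`, and if `γ T - γ 0` has all integer components for some `T > 0`, then
`γ` is constant. -/
theorem stmt_2 (n : ℕ) (hn : 1 ≤ n) (w : Fin (n + 1) → ℝ)
    (hlast : w (Fin.last n) = 0)
    (hw : ∃ i j : Fin (n + 1), LinearIndependent ℚ ![w i, w j])
    (g : ℝ → ℝ) (γ : ℝ → (Fin (n + 1) → ℝ))
    (hγ : ∀ t : ℝ, HasDerivAt γ (g (γ t (Fin.last n)) • w) t)
    (hper : ∃ T : ℝ, 0 < T ∧ ∀ k : Fin (n + 1), ∃ m : ℤ, γ T k - γ 0 k = (m : ℝ)) :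
    ∀ t s : ℝ, γ t = γ s :=
  stmt_2_general n w hlast hw g γ hγ hper
end

section
/- Let n ≥ 1, let N₀ and N₁ be real n×n matrices with N₀ invertible, and let φ : Fin n → ℝ be a nonzero vector. Then there exists δ > 0 such that N₀ + u·N₁ is invertible for every u ∈ (−δ, δ), and the set of those u ∈ (−δ, δ) for which every component of the vector u · ((N₀ + u·N₁)⁻¹ φ) (matrix inverse applied to φ, then scaled by u) is rational is countable. -/
open Matrix Polynomial

/-- For `N₀` invertible, `N₁` arbitrary and `φ ≠ 0`, there is `δ > 0` such that
`N₀ + u • N₁` is invertible for `u ∈ (-δ, δ)`, and the set of `u ∈ (-δ, δ)` for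
which every component of `u • ((N₀ + u • N₁)⁻¹ *ᵥ φ)` is rational is countable. -/
theorem stmt_7 (n : ℕ) (hn : 1 ≤ n)
    (N₀ N₁ : Matrix (Fin n) (Fin n) ℝ) (hN₀ : IsUnit N₀)
    (φ : Fin n → ℝ) (hφ : φ ≠ 0) :
    ∃ δ : ℝ, 0 < δ ∧
      (∀ u ∈ Set.Ioo (-δ) δ, IsUnit (N₀ + u • N₁)) ∧
      Set.Countable
        {u ∈ Set.Ioo (-δ) δ |
          ∀ k : Fin n, ∃ q : ℚ, (u • ((N₀ + u • N₁)⁻¹ *ᵥ φ)) k = (q : ℝ)} := by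
  classical
  have hdet₀ : N₀.det ≠ 0 := by
    have := hN₀.map (detMonoidHom (n := Fin n) (R := ℝ))
    simpa [isUnit_iff_ne_zero] using this
  -- the polynomial matrix
  set M : Matrix (Fin n) (Fin n) ℝ[X] :=
    N₀.map C + (X : ℝ[X]) • N₁.map C with hM
  have hmap : ∀ u : ℝ, (evalRingHom u).mapMatrix M = N₀ + u • N₁ := by
    intro u
    ext i j
    simp only [hM, RingHom.mapMatrix_apply, Matrix.map_apply, Matrix.add_apply,
      Matrix.smul_apply, Matrix.map_apply, smul_eq_mul, coe_evalRingHom, eval_add,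
      eval_mul, eval_X, eval_C]
  have hdetMap : ∀ u : ℝ, Polynomial.eval u M.det = (N₀ + u • N₁).det := by
    intro u
    have := RingHom.map_det (evalRingHom u) M
    rw [hmap u] at this
    simpa using this
  -- choose δ via continuity of determinant
  have hcont : Continuous fun u : ℝ => (N₀ + u • N₁).det := by
    exact (Continuous.matrix_det (by continuity))
  have h0 : (N₀ + (0:ℝ) • N₁).det ≠ 0 := by simpa using hdet₀
  have hev : ∀ᶠ u in nhds (0:ℝ), (N₀ + u • N₁).det ≠ 0 :=
    hcont.continuousAt.eventually_ne h0
  rw [Metric.eventually_nhds_iff] at hev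
  obtain ⟨δ, hδ, hball⟩ := hev
  have hdet : ∀ u ∈ Set.Ioo (-δ) δ, (N₀ + u • N₁).det ≠ 0 := by
    intro u hu
    exact hball (by simpa [Real.dist_eq, abs_lt] using And.intro hu.1 hu.2)
  refine ⟨δ, hδ, fun u hu => ?_, ?_⟩
  · exact (Matrix.isUnit_iff_isUnit_det _).2 (isUnit_iff_ne_zero.2 (hdet u hu))
  -- choose index k with (N₀⁻¹ *ᵥ φ) k ≠ 0
  have hinj : N₀⁻¹ *ᵥ φ ≠ 0 := by
    intro h
    apply hφ
    have := congrArg (fun v => N₀ *ᵥ v) h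
    simpa [Matrix.mulVec_mulVec, Matrix.mul_nonsing_inv N₀ (isUnit_iff_ne_zero.2 hdet₀), hdet₀]
      using this
  obtain ⟨k, hk⟩ : ∃ k, (N₀⁻¹ *ᵥ φ) k ≠ 0 := by
    by_contra h
    push_neg at h
    exact hinj (funext fun k => h k)
  -- polynomial G
  set G : ℝ[X] := ∑ j, M.adjugate k j * C (φ j) with hG
  have hGeval : ∀ u : ℝ, Polynomial.eval u G = ((N₀ + u • N₁).adjugate *ᵥ φ) k := by
    intro u
    have hadj : (evalRingHom u).mapMatrix M.adjugate = (N₀ + u • N₁).adjugate := by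
      rw [RingHom.map_adjugate, hmap u]
    simp only [hG, eval_finset_sum, eval_mul, eval_C, Matrix.mulVec, dotProduct]
    refine Finset.sum_congr rfl fun j _ => ?_
    have := congrFun (congrFun (congrArg (fun A => A) hadj) k) j
    simp only [RingHom.mapMatrix_apply, Matrix.map_apply, coe_evalRingHom] at this
    rw [this]
  -- adjugate vs inverse component
  have hadjcomp : ∀ (A : Matrix (Fin n) (Fin n) ℝ), A.det ≠ 0 →
      ∀ i, (A.adjugate *ᵥ φ) i = A.det * ((A⁻¹ *ᵥ φ) i) := by
    intro A hA i
    rw [Matrix.inv_def, Ring.inverse_eq_inv', smul_mulVec]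
    simp only [Pi.smul_apply, smul_eq_mul]
    field_simp
  have hG0 : Polynomial.eval 0 G ≠ 0 := by
    rw [hGeval 0]
    have : ((N₀ + (0:ℝ) • N₁)) = N₀ := by simp
    rw [this] at *
    rw [hadjcomp N₀ hdet₀ k]
    exact mul_ne_zero hdet₀ hk
  -- countable union over q
  have hsub : {u ∈ Set.Ioo (-δ) δ |
      ∀ k : Fin n, ∃ q : ℚ, (u • ((N₀ + u • N₁)⁻¹ *ᵥ φ)) k = (q : ℝ)} ⊆
      ⋃ q : ℚ, {u : ℝ | Polynomial.eval u (X * G - C (q : ℝ) * M.det) = 0} := by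
    rintro u ⟨hu, hq⟩
    obtain ⟨q, hqk⟩ := hq k
    refine Set.mem_iUnion.2 ⟨q, ?_⟩
    have hA := hdet u hu
    simp only [Set.mem_setOf_eq, eval_sub, eval_mul, eval_X, eval_C, hGeval u, hdetMap u]
    have : u * ((N₀ + u • N₁)⁻¹ *ᵥ φ) k = (q : ℝ) := by simpa using hqk
    rw [hadjcomp _ hA k]
    rw [show u * ((N₀ + u • N₁).det * ((N₀ + u • N₁)⁻¹ *ᵥ φ) k)
        = (N₀ + u • N₁).det * (u * ((N₀ + u • N₁)⁻¹ *ᵥ φ) k) by ring, this]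
    ring
  refine Set.Countable.mono hsub (Set.countable_iUnion fun q => ?_)
  have hpne : (X * G - C (q : ℝ) * M.det) ≠ 0 := by
    by_cases hq0 : (q : ℝ) = 0
    · rw [hq0]
      simp only [map_zero, zero_mul, sub_zero]
      exact mul_ne_zero X_ne_zero (fun h => hG0 (by rw [h]; simp))
    · intro h
      have := congrArg (Polynomial.eval 0) h
      simp only [eval_sub, eval_mul, eval_X, eval_C, zero_mul, eval_zero, hdetMap 0] at this
      have : (q : ℝ) * (N₀ + (0:ℝ) • N₁).det = 0 := by linarith
      simp only [zero_smul, add_zero] at this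
      exact hdet₀ ((mul_eq_zero.1 this).resolve_left hq0)
  exact (Polynomial.finite_setOf_isRoot hpne).countable
end
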